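/- Under the assumptions of the previous statement (rank[F_k; H_k] = n, identity weights), the minimax estimate x̂_k = P_k^{-1} r_k, with r_0 = H_0' y_0 and r_k = F_k' C_{k-1}(P_{k-1} + C_{k-1}'C_{k-1})^{-1} r_{k-1} + H_k' y_k, coincides with the Kalman filter estimate x̂_{k|k} defined by x̂_{0|0} = P_{0|0} H_0' y_0 and x̂_{k|k} = P_{k|k} F_k' A_{k-1} C_{k-1} x̂_{k-1|k-1} + P_{k|k} H_k' y_k. -/

import Mathlib

/-! Both recursions propagate the same information matrix: the Woodbury identity turns
`1 - C (P + CᵀC)⁻¹ Cᵀ` into `(1 + C P⁻¹ Cᵀ)⁻¹`, so `Pkk k = (P k)⁻¹` by induction, each `P k`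
being positive definite because `[F; H]` has full column rank. The push-through identity
`C (P + CᵀC)⁻¹ = (1 + C P⁻¹ Cᵀ)⁻¹ C P⁻¹` then matches the two estimate recursions term by term. -/

namespace Matrix

section Field

variable {K : Type*} [Field K] {l m n : Type*} [Fintype n]

theorem mulVec_injective_of_rank_eq_card {A : Matrix m n K} (h : A.rank = Fintype.card n) :
    Function.Injective A.mulVec :=
  mulVec_injective_iff.mpr <| linearIndependent_iff_card_eq_finrank_span.mpr <|
    h.symm.trans (rank_eq_finrank_span_cols A)

theorem eq_nonsing_inv_of_nonsing_inv_eq [DecidableEq n] {A B : Matrix n n K} (h : A⁻¹ = B)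
    (hB : IsUnit B) : A = B⁻¹ := by
  have hA : IsUnit A.det := isUnit_nonsing_inv_det_iff.mp (h ▸ (isUnit_iff_isUnit_det B).mp hB)
  rw [← h, nonsing_inv_nonsing_inv A hA]

variable [Fintype l] [Fintype m] [PartialOrder K] [StarRing K] [StarOrderedRing K]

theorem PosDef.fromBlocks_zero {A : Matrix m m K} {D : Matrix n n K} (hA : A.PosDef)
    (hD : D.PosDef) : (fromBlocks A 0 0 D).PosDef := by
  refine .of_dotProduct_mulVec_pos (hA.isHermitian.fromBlocks (by simp) hD.isHermitian) ?_
  intro x hx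
  obtain ⟨x₁, x₂, rfl⟩ : ∃ x₁ x₂, x = Sum.elim x₁ x₂ := ⟨_, _, (Sum.elim_comp_inl_inr x).symm⟩
  simp only [fromBlocks_mulVec, Sum.elim_comp_inl, Sum.elim_comp_inr, zero_mulVec, add_zero,
    zero_add, Function.star_sumElim, sumElim_dotProduct_sumElim]
  by_cases hx₁ : x₁ = 0
  · have hx₂ : x₂ ≠ 0 := by rintro rfl; exact hx (by simp [hx₁])
    exact add_pos_of_nonneg_of_pos (hA.posSemidef.dotProduct_mulVec_nonneg x₁)
      (hD.dotProduct_mulVec_pos hx₂)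
  · exact add_pos_of_pos_of_nonneg (hA.dotProduct_mulVec_pos hx₁)
      (hD.posSemidef.dotProduct_mulVec_nonneg x₂)

theorem posDef_conjTranspose_mul_mul_add_conjTranspose_mul_self [DecidableEq l]
    {W : Matrix m m K} (hW : W.PosDef) (F : Matrix m n K) (H : Matrix l n K)
    (hFH : (fromRows F H).rank = Fintype.card n) : (Fᴴ * W * F + Hᴴ * H).PosDef := by
  -- `Fᴴ W F + Hᴴ H = [F; H]ᴴ diag(W, 1) [F; H]`
  have h := (hW.fromBlocks_zero (PosDef.one (n := l))).conjTranspose_mul_mul_same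
    (mulVec_injective_of_rank_eq_card hFH)
  simpa [conjTranspose_fromRows_eq_fromCols_conjTranspose, fromCols_mul_fromBlocks,
    fromCols_mul_fromRows] using h

end Field

section CommRing

variable {α : Type*} [CommRing α] {m n : Type*} [Fintype m] [Fintype n] [DecidableEq m]
  [DecidableEq n] {P : Matrix n n α} (C : Matrix m n α) (B : Matrix n m α)

theorem inv_one_add_mul_inv_mul (hP : IsUnit P) (hN : IsUnit (P + B * C)) :
    (1 + C * P⁻¹ * B)⁻¹ = 1 - C * (P + B * C)⁻¹ * B := by
  obtain ⟨_⟩ := hP.nonempty_invertible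
  have h := add_mul_mul_inv_eq_sub (1 : Matrix m m α) C P⁻¹ B isUnit_one
    (isUnit_nonsing_inv_iff.mpr hP)
  simp only [inv_one, inv_inv_of_invertible, Matrix.mul_one, Matrix.one_mul] at h
  exact h hN

theorem mul_inv_add_mul (hP : IsUnit P) (hN : IsUnit (P + B * C))
    (hM : IsUnit (1 + C * P⁻¹ * B)) :
    C * (P + B * C)⁻¹ = (1 + C * P⁻¹ * B)⁻¹ * C * P⁻¹ := by
  obtain ⟨_⟩ := hP.nonempty_invertible
  obtain ⟨_⟩ := hN.nonempty_invertible
  obtain ⟨_⟩ := hM.nonempty_invertible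
  have hpush : (1 + C * P⁻¹ * B) * C = C * P⁻¹ * (P + B * C) := by
    simp [Matrix.add_mul, Matrix.mul_add, Matrix.mul_assoc]
  rw [eq_comm, Matrix.mul_assoc, inv_mul_eq_iff_eq_mul_of_invertible, ← Matrix.mul_assoc, hpush,
    mul_inv_cancel_right_of_invertible]

end CommRing

end Matrix

open Matrix

theorem stmt17 {m n q : ℕ}
    (F C : ℕ → Matrix (Fin m) (Fin n) ℝ) (Hm : ℕ → Matrix (Fin q) (Fin n) ℝ)
    (hrank : ∀ k, (Matrix.fromRows (F k) (Hm k)).rank = n)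
    (y : ℕ → Fin q → ℝ)
    (P Pkk : ℕ → Matrix (Fin n) (Fin n) ℝ)
    (hP0 : P 0 = (F 0)ᵀ * F 0 + (Hm 0)ᵀ * Hm 0)
    (hPk : ∀ k, P (k + 1) = (Hm (k + 1))ᵀ * Hm (k + 1)
      + (F (k + 1))ᵀ * (1 - C k * (P k + (C k)ᵀ * C k)⁻¹ * (C k)ᵀ) * F (k + 1))
    (hQ0 : (Pkk 0)⁻¹ = (F 0)ᵀ * F 0 + (Hm 0)ᵀ * Hm 0)
    (hQk : ∀ k, (Pkk (k + 1))⁻¹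
      = (F (k + 1))ᵀ * (1 + C k * Pkk k * (C k)ᵀ)⁻¹ * F (k + 1)
        + (Hm (k + 1))ᵀ * Hm (k + 1))
    (r : ℕ → Fin n → ℝ)
    (hr0 : r 0 = (Hm 0)ᵀ *ᵥ y 0)
    (hrk : ∀ k, r (k + 1)
      = (F (k + 1))ᵀ *ᵥ (C k *ᵥ ((P k + (C k)ᵀ * C k)⁻¹ *ᵥ r k))
        + (Hm (k + 1))ᵀ *ᵥ y (k + 1))
    (xh : ℕ → Fin n → ℝ)
    (hx0 : xh 0 = Pkk 0 *ᵥ ((Hm 0)ᵀ *ᵥ y 0))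
    (hxk : ∀ k, xh (k + 1)
      = Pkk (k + 1) *ᵥ ((F (k + 1))ᵀ *ᵥ ((1 + C k * Pkk k * (C k)ᵀ)⁻¹ *ᵥ (C k *ᵥ xh k)))
        + Pkk (k + 1) *ᵥ ((Hm (k + 1))ᵀ *ᵥ y (k + 1))) :
    ∀ k, (P k)⁻¹ *ᵥ r k = xh k := by
  have hrank' (k : ℕ) : (fromRows (F k) (Hm k)).rank = Fintype.card (Fin n) := by
    simpa using hrank k
  have hAinv (k : ℕ) (hP : (P k).PosDef) : (1 + C k * (P k)⁻¹ * (C k)ᵀ).PosDef := by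
    simpa using PosDef.one.add_posSemidef (hP.inv.posSemidef.mul_mul_conjTranspose_same (C k))
  have hPC (k : ℕ) (hP : (P k).PosDef) : (P k + (C k)ᵀ * C k).PosDef := by
    simpa using hP.add_posSemidef (posSemidef_conjTranspose_mul_self (C k))
  have hcov : ∀ k, (P k).PosDef ∧ Pkk k = (P k)⁻¹ := by
    intro k
    induction k with
    | zero =>
      have hP : (P 0).PosDef := by
        simpa [hP0] using posDef_conjTranspose_mul_mul_add_conjTranspose_mul_self PosDef.one
          (F 0) (Hm 0) (hrank' 0)
      exact ⟨hP, eq_nonsing_inv_of_nonsing_inv_eq (hQ0.trans hP0.symm) hP.isUnit⟩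
    | succ k ih =>
      obtain ⟨hP, hPkk⟩ := ih
      have hP' : P (k + 1) = (F (k + 1))ᵀ * (1 + C k * (P k)⁻¹ * (C k)ᵀ)⁻¹ * F (k + 1)
          + (Hm (k + 1))ᵀ * Hm (k + 1) := by
        rw [hPk, inv_one_add_mul_inv_mul _ _ hP.isUnit (hPC k hP).isUnit, add_comm]
      have hPD : (P (k + 1)).PosDef := by
        simpa [hP'] using posDef_conjTranspose_mul_mul_add_conjTranspose_mul_self
          (hAinv k hP).inv (F (k + 1)) (Hm (k + 1)) (hrank' (k + 1))
      exact ⟨hPD, eq_nonsing_inv_of_nonsing_inv_eq (by rw [hQk, hPkk, hP']) hPD.isUnit⟩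
  intro k
  induction k with
  | zero => rw [hr0, hx0, (hcov 0).2]
  | succ k ih =>
    have hP := (hcov k).1
    rw [hrk, hxk, (hcov (k + 1)).2, (hcov k).2, ← ih, mulVec_add]
    simp only [mulVec_mulVec, Matrix.mul_assoc,
      mul_inv_add_mul _ _ hP.isUnit (hPC k hP).isUnit (hAinv k hP).isUnit]
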